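/- arXiv:1501.06098 — 2 statements merged into one kernel-verified Lean document; each statement's English description precedes it below -/
import Mathlib

section
/- For every integer k ≥ 2, setting M = 2k², a = k²(2k²−1), and c = k³(4k⁴−1), one has S(M,a) = c²; moreover a = M(M−1)/2 and c = (M(M²−1)/2)·√(M/2). In particular, for every M > 2 equal to twice an integer square there is at least one pair (a,c) of positive integers with a > 1 and S(M,a) = c². -/
/-- `S M a` is the sum of `M` consecutive cubes starting at `a`. -/
def S (M : ℕ) (a : ℤ) : ℤ := ∑ i ∈ Finset.range M, (a + i) ^ 3

lemma S_formula (M : ℕ) (a : ℤ) :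
    4 * S M a = ((a + M - 1) * (a + M)) ^ 2 - ((a - 1) * a) ^ 2 := by
  induction M with
  | zero => simp [S]
  | succ n ih =>
    have h : S (n + 1) a = S n a + (a + n) ^ 3 := by
      simp [S, Finset.sum_range_succ]
    push_cast [h]
    push_cast at ih
    nlinarith [ih]

lemma key (k : ℕ) (hk : 2 ≤ k) (M : ℕ) (a c : ℤ)
    (hM : M = 2 * k ^ 2)
    (ha : a = (k : ℤ) ^ 2 * (2 * (k : ℤ) ^ 2 - 1))
    (hc : c = (k : ℤ) ^ 3 * (4 * (k : ℤ) ^ 4 - 1)) :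
    S M a = c ^ 2 := by
  have h4 := S_formula M a
  have hMc : (M : ℤ) = 2 * (k : ℤ) ^ 2 := by exact_mod_cast congrArg (Nat.cast : ℕ → ℤ) hM
  have : (4 : ℤ) * S M a = 4 * c ^ 2 := by
    rw [h4, hMc, ha, hc]; ring
  linarith

/-- For every integer `k ≥ 2`, with `M = 2k²`, `a = k²(2k²−1)` and `c = k³(4k⁴−1)`,
one has `S(M,a) = c²`; moreover `a = M(M−1)/2` and `c = (M(M²−1)/2)·√(M/2)`.
In particular, every `M > 2` equal to twice an integer square admits a pair `(a,c)`
with `a > 1` and `S(M,a) = c²`. -/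
theorem twice_square_M_solutions :
    (∀ k : ℕ, 2 ≤ k → ∀ (M : ℕ) (a c : ℤ),
      M = 2 * k ^ 2 →
      a = (k : ℤ) ^ 2 * (2 * (k : ℤ) ^ 2 - 1) →
      c = (k : ℤ) ^ 3 * (4 * (k : ℤ) ^ 4 - 1) →
      S M a = c ^ 2 ∧
        2 * a = (M : ℤ) * ((M : ℤ) - 1) ∧
        2 * c = (M : ℤ) * ((M : ℤ) ^ 2 - 1) * (Nat.sqrt (M / 2) : ℤ)) ∧
    (∀ M : ℕ, 2 < M → (∃ k : ℕ, M = 2 * k ^ 2) →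
      ∃ a c : ℤ, 1 < a ∧ 0 < c ∧ S M a = c ^ 2) := by
  constructor
  · intro k hk M a c hM ha hc
    have hMc : (M : ℤ) = 2 * (k : ℤ) ^ 2 := by exact_mod_cast congrArg (Nat.cast : ℕ → ℤ) hM
    have hsqrt : Nat.sqrt (M / 2) = k := by
      rw [hM]; simp [Nat.mul_div_cancel_left, Nat.sqrt_eq']
    refine ⟨key k hk M a c hM ha hc, by rw [ha, hMc]; ring, by rw [hc, hMc, hsqrt]; ring⟩
  · intro M hM ⟨k, hk⟩
    have hk2 : 2 ≤ k := by nlinarith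
    have hkz : (2 : ℤ) ≤ (k : ℤ) := by exact_mod_cast hk2
    refine ⟨(k : ℤ) ^ 2 * (2 * (k : ℤ) ^ 2 - 1), (k : ℤ) ^ 3 * (4 * (k : ℤ) ^ 4 - 1),
      by nlinarith, mul_pos (by positivity) (by nlinarith), key k hk2 M _ _ hk rfl rfl⟩
end

section
/- For all integers σ ≥ 2 and n ≥ 1, the number M = U_{n−1}(σ²) is a positive integer, the numbers U_n(σ²) − U_{n−1}(σ²) + 1 and σ·U_n(σ²)·U_{n−1}(σ²) are even, and setting a = (U_n(σ²) − U_{n−1}(σ²) + 1)/2 and c = σ·U_n(σ²)·U_{n−1}(σ²)/2, one has S(M,a) = c². (This is the full family of solutions arising from the case δ = 1.) -/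
/-- `U n x` is the `n`-th Chebyshev polynomial of the second kind evaluated at `x`. -/
noncomputable def U (n : ℤ) (x : ℤ) : ℤ := (Polynomial.Chebyshev.U ℤ n).eval x

lemma U_zero' (x : ℤ) : U 0 x = 1 := by simp [U]

lemma U_one' (x : ℤ) : U 1 x = 2 * x := by simp [U, Polynomial.Chebyshev.U_one]

lemma U_rec (m x : ℤ) : U (m + 2) x = 2 * x * U (m + 1) x - U m x := by
  simp [U, Polynomial.Chebyshev.U_add_two]

/-- Positivity and monotonicity -/
lemma U_pos_mono (x : ℤ) (hx : 1 ≤ x) :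
    ∀ k : ℕ, 1 ≤ U (k : ℤ) x ∧ U (k : ℤ) x ≤ U ((k : ℤ) + 1) x := by
  intro k
  induction k with
  | zero =>
    rw [Nat.cast_zero, zero_add, U_zero', U_one']
    constructor
    · exact le_refl 1
    · linarith
  | succ j ih =>
    obtain ⟨h1, h2⟩ := ih
    have hr := U_rec (j : ℤ) x
    have e : ((j + 1 : ℕ) : ℤ) = (j : ℤ) + 1 := by push_cast; ring
    have e2 : ((j : ℤ) + 1) + 1 = (j : ℤ) + 2 := by ring
    rw [e, e2, hr]
    constructor
    · linarith
    · nlinarith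

/-- Pell-type identity -/
lemma U_pell (x : ℤ) : ∀ k : ℕ,
    U ((k : ℤ) + 1) x ^ 2 + U (k : ℤ) x ^ 2
      - 2 * x * U ((k : ℤ) + 1) x * U (k : ℤ) x = 1 := by
  intro k
  induction k with
  | zero =>
    rw [Nat.cast_zero, zero_add, U_zero', U_one']
    ring
  | succ j ih =>
    have hr := U_rec (j : ℤ) x
    have e : ((j + 1 : ℕ) : ℤ) = (j : ℤ) + 1 := by push_cast; ring
    have e2 : ((j : ℤ) + 1) + 1 = (j : ℤ) + 2 := by ring
    rw [e, e2, hr]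
    nlinarith [ih]

/-- closed form for the sum of cubes -/
lemma S_closed (a : ℤ) : ∀ M : ℕ,
    4 * S M a = ((a + M - 1) * (a + M)) ^ 2 - ((a - 1) * a) ^ 2 := by
  intro M
  induction M with
  | zero => simp [S]
  | succ M ih =>
    have : S (M + 1) a = S M a + (a + M) ^ 3 := by
      simp [S, Finset.sum_range_succ]
    rw [this]
    push_cast
    push_cast at ih
    nlinarith [ih]

/-- For integers `σ ≥ 2` and `n ≥ 1`: `M = U_{n−1}(σ²)` is positive,
`U_n(σ²) − U_{n−1}(σ²) + 1` and `σ·U_n(σ²)·U_{n−1}(σ²)` are even, and with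
`a = (U_n(σ²) − U_{n−1}(σ²) + 1)/2` and `c = σ·U_n(σ²)·U_{n−1}(σ²)/2`
one has `S(M,a) = c²` (the solution family for `δ = 1`). -/
theorem delta_one_solutions (σ n : ℤ) (hσ : 2 ≤ σ) (hn : 1 ≤ n) :
    0 < U (n - 1) (σ ^ 2) ∧
    Even (U n (σ ^ 2) - U (n - 1) (σ ^ 2) + 1) ∧
    Even (σ * U n (σ ^ 2) * U (n - 1) (σ ^ 2)) ∧
    ∀ M : ℕ, (M : ℤ) = U (n - 1) (σ ^ 2) →
      S M ((U n (σ ^ 2) - U (n - 1) (σ ^ 2) + 1) / 2)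
        = (σ * U n (σ ^ 2) * U (n - 1) (σ ^ 2) / 2) ^ 2 := by
  set x := σ ^ 2 with hxdef
  have hx : 1 ≤ x := by nlinarith
  have hk : (0:ℤ) ≤ n - 1 := by linarith
  set b := U n x with hb
  set m := U (n - 1) x with hm
  obtain ⟨k, hkk⟩ : ∃ k : ℕ, (k : ℤ) = n - 1 := ⟨(n - 1).toNat, Int.toNat_of_nonneg hk⟩
  have hn1 : (k : ℤ) + 1 = n := by omega
  have hpell : b ^ 2 + m ^ 2 - 2 * x * b * m = 1 := by
    have := U_pell x k
    rwa [hn1, hkk] at this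
  have hpos := U_pos_mono x hx k
  rw [hkk] at hpos
  have hmpos : 0 < m := by linarith [hpos.1]
  -- parity
  have hodd : ¬ (Even b ↔ Even m) := by
    intro h
    have h2 : Even (b ^ 2 + m ^ 2) ↔ Even ((1:ℤ) + 2 * x * b * m) := by
      constructor <;> intro <;>
        · have : b ^ 2 + m ^ 2 = 1 + 2 * x * b * m := by linarith
          first
          | (rw [← this]; assumption)
          | (rw [this] at *; assumption)
    have he2 : Even (2 * x * b * m) := by
      refine ⟨x * b * m, by ring⟩
    have hsq : Even (b ^ 2 + m ^ 2) := by
      rcases (em (Even b)) with hbe | hbo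
      · exact (Int.even_add).2 (by
          simp [Int.even_pow, hbe, h.1 hbe])
      · have hmo : ¬ Even m := fun hme => hbo (h.2 hme)
        refine (Int.even_add).2 ?_
        simp [Int.even_pow, hbo, hmo]
    have : Even ((1:ℤ) + 2 * x * b * m) := h2.1 hsq
    rcases this with ⟨t, ht⟩
    rcases he2 with ⟨s, hs⟩
    omega
  have hev1 : Even (b - m + 1) := by
    rcases em (Even b) with hbe | hbo
    · have hmo : ¬ Even m := fun hme => hodd ⟨fun _ => hme, fun _ => hbe⟩
      rcases hbe with ⟨i, hi⟩
      rcases Int.even_or_odd m with hme | ⟨j, hj⟩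
      · exact absurd hme hmo
      · exact ⟨i - j, by omega⟩
    · have hme : Even m := by
        rcases Int.even_or_odd m with hme | hmo2
        · exact hme
        · exfalso; apply hodd
          constructor
          · intro h; exact absurd h hbo
          · intro h
            rcases hmo2 with ⟨j, hj⟩
            rcases h with ⟨i, hi⟩
            omega
      rcases Int.even_or_odd b with hbe2 | ⟨i, hi⟩
      · exact absurd hbe2 hbo
      · rcases hme with ⟨j, hj⟩
        exact ⟨i - j + 1, by omega⟩
  have hev2 : Even (σ * b * m) := by
    have : Even (b * m) := by
      rcases em (Even b) with hbe | hbo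
      · exact (Int.even_mul).2 (Or.inl hbe)
      · have hme : Even m := by
          rcases Int.even_or_odd m with hme | hmo2
          · exact hme
          · exfalso; apply hodd
            constructor
            · intro h; exact absurd h hbo
            · intro h
              rcases hmo2 with ⟨j, hj⟩; rcases h with ⟨i, hi⟩; omega
        exact (Int.even_mul).2 (Or.inr hme)
    rcases this with ⟨t, ht⟩
    exact ⟨σ * t, by rw [mul_assoc, ht]; ring⟩
  refine ⟨hmpos, hev1, hev2, ?_⟩
  intro M hM
  -- extract halves
  rcases hev1 with ⟨a, ha⟩
  rcases hev2 with ⟨c, hc⟩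
  have hA : (b - m + 1) / 2 = a := by omega
  have hC : σ * b * m / 2 = c := by omega
  rw [hA, hC]
  have h4 := S_closed a M
  have hMm : (M : ℤ) = m := hM
  -- key polynomial identity
  have key : 2 * (((a + (M:ℤ) - 1) * (a + (M:ℤ))) ^ 2 - ((a - 1) * a) ^ 2)
      = 2 * (σ * b * m) ^ 2 := by
    have hb' : b = m + 2 * a - 1 := by omega
    rw [hMm, hb']
    rw [hb'] at hpell
    linear_combination ((m + 2 * a - 1) * m) * hpell
  have h2c : σ * b * m = 2 * c := by omega
  rw [h2c] at key
  linarith [h4, key]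
end
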